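/- arXiv:2408.08472 — 6 statements merged into one kernel-verified Lean document; each statement's English description precedes it below -/
import Mathlib

section
/- Let w, x, y, z be binary (±1) sequences of the same length N. Then (G(w,x), G(y,z)) is a quaternary Legendre pair (i.e., R_{G(w,x)}(u) + R_{G(y,z)}(u) = -2 for all u ≠ 0) if and only if (w,x) and (y,z) form an amicable set (R_{w,x}(u) + R_{y,z}(u) = R_{x,w}(u) + R_{z,y}(u) for all u ≠ 0) and R_w(u) + R_x(u) + R_y(u) + R_z(u) = -4 for all u ≠ 0. -/
open Finset Complex in
/-- `(G(w,x), G(y,z))` is a quaternary Legendre pair iff `(w,x)` and `(y,z)` are an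
amicable set and `R_w(u)+R_x(u)+R_y(u)+R_z(u) = -4` for all `u ≠ 0`. -/
theorem gray_map_legendre_pair_iff (N : ℕ) [NeZero N] (w x y z : ZMod N → ℂ)
    (hw : ∀ k, w k = 1 ∨ w k = -1) (hx : ∀ k, x k = 1 ∨ x k = -1)
    (hy : ∀ k, y k = 1 ∨ y k = -1) (hz : ∀ k, z k = 1 ∨ z k = -1)
    (a b : ZMod N → ℂ)
    (ha : ∀ k, a k = (1 + I) / 2 * w k + (1 - I) / 2 * x k)
    (hb : ∀ k, b k = (1 + I) / 2 * y k + (1 - I) / 2 * z k) :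
    (∀ u : ZMod N, u ≠ 0 →
        (∑ k : ZMod N, a k * (starRingEnd ℂ) (a (k + u))) +
          ∑ k : ZMod N, b k * (starRingEnd ℂ) (b (k + u)) = -2)
      ↔
    ((∀ u : ZMod N, u ≠ 0 →
        (∑ k : ZMod N, w k * (starRingEnd ℂ) (x (k + u))) +
          ∑ k : ZMod N, y k * (starRingEnd ℂ) (z (k + u)) =
        (∑ k : ZMod N, x k * (starRingEnd ℂ) (w (k + u))) +
          ∑ k : ZMod N, z k * (starRingEnd ℂ) (y (k + u))) ∧
      (∀ u : ZMod N, u ≠ 0 →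
        (∑ k : ZMod N, w k * (starRingEnd ℂ) (w (k + u))) +
          (∑ k : ZMod N, x k * (starRingEnd ℂ) (x (k + u))) +
          (∑ k : ZMod N, y k * (starRingEnd ℂ) (y (k + u))) +
          ∑ k : ZMod N, z k * (starRingEnd ℂ) (z (k + u)) = -4)) := by
  have hw' : ∀ k, (starRingEnd ℂ) (w k) = w k := fun k => by rcases hw k with h | h <;> simp [h]
  have hx' : ∀ k, (starRingEnd ℂ) (x k) = x k := fun k => by rcases hx k with h | h <;> simp [h]
  have hy' : ∀ k, (starRingEnd ℂ) (y k) = y k := fun k => by rcases hy k with h | h <;> simp [h]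
  have hz' : ∀ k, (starRingEnd ℂ) (z k) = z k := fun k => by rcases hz k with h | h <;> simp [h]
  have hconj : (starRingEnd ℂ) ((1 + I) / 2) = (1 - I) / 2 := by
    rw [map_div₀, map_add, map_one, Complex.conj_I, map_ofNat]
    ring
  -- pointwise expansion for a
  have expand : ∀ (p q : ZMod N → ℂ), (∀ k, (starRingEnd ℂ) (p k) = p k) →
      (∀ k, (starRingEnd ℂ) (q k) = q k) →
      ∀ u : ZMod N,
      (∑ k : ZMod N, ((1 + I) / 2 * p k + (1 - I) / 2 * q k) *
          (starRingEnd ℂ) ((1 + I) / 2 * p (k + u) + (1 - I) / 2 * q (k + u))) =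
        1/2 * ((∑ k : ZMod N, p k * p (k + u)) + ∑ k : ZMod N, q k * q (k + u)) +
        I/2 * ((∑ k : ZMod N, p k * q (k + u)) - ∑ k : ZMod N, q k * p (k + u)) := by
    intro p q hp hq u
    have e1 : ∀ k : ZMod N, ((1 + I) / 2 * p k + (1 - I) / 2 * q k) *
        (starRingEnd ℂ) ((1 + I) / 2 * p (k + u) + (1 - I) / 2 * q (k + u)) =
        1/2 * (p k * p (k + u)) + 1/2 * (q k * q (k + u)) +
        I/2 * (p k * q (k + u)) - I/2 * (q k * p (k + u)) := by
      intro k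
      rw [map_add, map_mul, map_mul, hconj, hp, hq]
      have h2 : (starRingEnd ℂ) ((1 - I) / 2) = (1 + I) / 2 := by
        rw [map_div₀, map_sub, map_one, Complex.conj_I, map_ofNat]
        ring
      rw [h2]
      linear_combination ((p k * q (k+u) + q k * p (k+u) - p k * p (k+u) - q k * q (k+u))/4) * Complex.I_sq
    rw [Finset.sum_congr rfl fun k _ => e1 k]
    rw [Finset.sum_sub_distrib, Finset.sum_add_distrib, Finset.sum_add_distrib,
      ← Finset.mul_sum, ← Finset.mul_sum, ← Finset.mul_sum, ← Finset.mul_sum]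
    ring
  have him : ∀ (p q : ZMod N → ℂ), (∀ k, p k = 1 ∨ p k = -1) → (∀ k, q k = 1 ∨ q k = -1) →
      ∀ u : ZMod N, (∑ k : ZMod N, p k * q (k + u)).im = 0 := by
    intro p q hp hq u
    rw [Complex.im_sum]
    apply Finset.sum_eq_zero
    intro k _
    rcases hp k with h | h <;> rcases hq (k + u) with h' | h' <;> simp [h, h']
  have aux : ∀ c d : ℂ, c.im = 0 → d.im = 0 → (1/2*c + I/2*d = -2 ↔ d = 0 ∧ c = -4) := by
    intro c d hc hd
    simp [Complex.ext_iff, hc, hd]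
    constructor
    · rintro ⟨h1, h2⟩; exact ⟨by linarith, by linarith⟩
    · rintro ⟨h1, h2⟩; exact ⟨by linarith, by linarith⟩
  simp only [ha, hb, hw', hx', hy', hz']
  have point : ∀ u : ZMod N,
      ((∑ k : ZMod N, ((1 + I) / 2 * w k + (1 - I) / 2 * x k) *
          (starRingEnd ℂ) ((1 + I) / 2 * w (k + u) + (1 - I) / 2 * x (k + u))) +
        ∑ k : ZMod N, ((1 + I) / 2 * y k + (1 - I) / 2 * z k) *
          (starRingEnd ℂ) ((1 + I) / 2 * y (k + u) + (1 - I) / 2 * z (k + u)) = -2) ↔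
      (((∑ k : ZMod N, w k * x (k + u)) + ∑ k : ZMod N, y k * z (k + u)) =
        ((∑ k : ZMod N, x k * w (k + u)) + ∑ k : ZMod N, z k * y (k + u)) ∧
       ((∑ k : ZMod N, w k * w (k + u)) + (∑ k : ZMod N, x k * x (k + u)) +
        (∑ k : ZMod N, y k * y (k + u)) + ∑ k : ZMod N, z k * z (k + u)) = -4) := by
    intro u
    rw [expand w x hw' hx' u, expand y z hy' hz' u]
    have hc : ((∑ k : ZMod N, w k * w (k + u)) + (∑ k : ZMod N, x k * x (k + u)) +
        ((∑ k : ZMod N, y k * y (k + u)) + ∑ k : ZMod N, z k * z (k + u))).im = 0 := by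
      simp [him w w hw hw u, him x x hx hx u, him y y hy hy u, him z z hz hz u]
    have hd : (((∑ k : ZMod N, w k * x (k + u)) - ∑ k : ZMod N, x k * w (k + u)) +
        ((∑ k : ZMod N, y k * z (k + u)) - ∑ k : ZMod N, z k * y (k + u))).im = 0 := by
      simp [him w x hw hx u, him x w hx hw u, him y z hy hz u, him z y hz hy u]
    have := aux _ _ hc hd
    constructor
    · intro h
      have h' := this.mp (by linear_combination h)
      exact ⟨by linear_combination h'.1, by linear_combination h'.2⟩
    · rintro ⟨h1, h2⟩
      have h' := this.mpr ⟨by linear_combination h1, by linear_combination h2⟩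
      linear_combination h'
  constructor
  · intro h
    exact ⟨fun u hu => ((point u).mp (h u hu)).1, fun u hu => ((point u).mp (h u hu)).2⟩
  · rintro ⟨h1, h2⟩ u hu
    exact (point u).mpr ⟨h1 u hu, h2 u hu⟩
end

section
/- Let q be an odd prime power with q ≡ 1 (mod 4), let g be a primitive element (generator of the multiplicative group) of GF(q), and let χ be the extended quadratic character of GF(q). Define length-(q-1)/2 sequences a, b by a_0 = i, a_k = χ(g^{2k} - 1) for 0 < k < (q-1)/2, and b_k = χ(g^{2k+1} - 1) for 0 ≤ k < (q-1)/2. Then (a,b) is a quaternary Legendre pair: R_a(u) + R_b(u) = -2 for all u ≢ 0 mod (q-1)/2. -/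
/-! With `c = g^(2u)`, a nonzero square different from `1`, one has `g^(2(k+u)) = g^(2k) c`, and the
even and odd powers of `g` together run once through the nonzero elements of `F`. Hence, apart
from the entry `a_0 = i`, `R_a(u) + R_b(u)` is `∑_{x ≠ 0} χ(x-1) χ(xc-1) = -χ(c) - 1 = -2`; the
complete sum is `χ(-c)` times the Jacobi sum `J(χ, χ) = -χ(-1)`. Replacing the entry `χ(0) = 0`
by `i` adds `i χ(c-1) - i χ(c⁻¹-1)`, which vanishes since `c⁻¹ - 1 = -c⁻¹ (c - 1)` and `-1` is a
square when `q ≡ 1 (mod 4)`. -/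

open Finset ComplexConjugate

section Primitive

variable {F : Type*} [Field F] [Fintype F] {g : F}

theorem ne_zero_of_orderOf_eq_card_sub_one (hg : orderOf g = Fintype.card F - 1) : g ≠ 0 := by
  rintro rfl
  have := Fintype.one_lt_card (α := F)
  rw [orderOf_zero] at hg
  omega

theorem sq_pow_eq_one_of_orderOf_eq_card_sub_one (hg : orderOf g = Fintype.card F - 1) {N : ℕ}
    (hcard : Fintype.card F = 2 * N + 1) : (g ^ 2) ^ N = 1 := by
  rw [← pow_mul, show 2 * N = orderOf g by omega, pow_orderOf_eq_one]

end Primitive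

section Sums

variable {M : Type*} [AddCommMonoid M]

theorem Finset.sum_range_two_mul (f : ℕ → M) (n : ℕ) :
    ∑ j ∈ range (2 * n), f j = ∑ k ∈ range n, (f (2 * k) + f (2 * k + 1)) := by
  induction n with
  | zero => simp
  | succ n ih => rw [Nat.mul_succ, sum_range_succ, sum_range_succ, sum_range_succ, ih, add_assoc]

theorem ZMod.sum_comp_val {N : ℕ} [NeZero N] (f : ℕ → M) :
    ∑ k : ZMod N, f k.val = ∑ j ∈ range N, f j := by
  obtain ⟨n, rfl⟩ := Nat.exists_eq_succ_of_ne_zero (NeZero.ne N)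
  exact Fin.sum_univ_eq_sum_range f (n + 1)

variable {F : Type*} [Field F] [Fintype F] [DecidableEq F]

theorem sum_erase_zero_eq_sum_range_pow {g : F} (hg : orderOf g = Fintype.card F - 1)
    (f : F → M) : ∑ x ∈ univ.erase 0, f x = ∑ j ∈ range (Fintype.card F - 1), f (g ^ j) := by
  have hg0 := ne_zero_of_orderOf_eq_card_sub_one hg
  have hinj : Set.InjOn (g ^ ·) (range (orderOf g)) := fun i hi j hj =>
    pow_injOn_Iio_orderOf (by simpa using hi) (by simpa using hj)
  rw [← hg, ← sum_image hinj]
  congr 1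
  symm
  refine eq_of_subset_of_card_le (fun x hx => ?_) ?_
  · obtain ⟨j, -, rfl⟩ := mem_image.mp hx
    exact mem_erase.mpr ⟨pow_ne_zero j hg0, mem_univ _⟩
  · rw [card_image_of_injOn hinj, card_range, hg, card_erase_of_mem (mem_univ _), card_univ]

theorem sum_erase_zero_eq_sum_zmod_pow {g : F} (hg : orderOf g = Fintype.card F - 1)
    {N : ℕ} [NeZero N] (hcard : Fintype.card F = 2 * N + 1) (f : F → M) :
    ∑ x ∈ univ.erase 0, f x = ∑ k : ZMod N, (f ((g ^ 2) ^ k.val) + f ((g ^ 2) ^ k.val * g)) := by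
  rw [sum_erase_zero_eq_sum_range_pow hg, hcard, Nat.add_sub_cancel, sum_range_two_mul,
    ZMod.sum_comp_val fun j => f ((g ^ 2) ^ j) + f ((g ^ 2) ^ j * g)]
  simp only [pow_mul, pow_succ]

end Sums

section PowVal

variable {N : ℕ} [NeZero N]

theorem ZMod.pow_val_add {G : Type*} [Monoid G] {h : G} (hN : h ^ N = 1) (k u : ZMod N) :
    h ^ (k + u).val = h ^ k.val * h ^ u.val := by
  rw [ZMod.val_add, ← pow_add, ← pow_eq_pow_mod _ hN]

theorem ZMod.pow_val_neg {G : Type*} [DivisionMonoid G] {h : G} (hN : h ^ N = 1) (u : ZMod N) :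
    h ^ (-u).val = (h ^ u.val)⁻¹ :=
  eq_inv_of_mul_eq_one_left <| by
    rw [← ZMod.pow_val_add hN, neg_add_cancel, ZMod.val_zero, pow_zero]

end PowVal

section Autocorrelation

open Function

variable {N : ℕ} [NeZero N]

theorem sum_update_zero_mul_conj_shift (t : ZMod N → ℂ) (ht : t 0 = 0) (z : ℂ) {u : ZMod N}
    (hu : u ≠ 0) :
    ∑ k, update t 0 z k * conj (update t 0 z (k + u)) =
      ∑ k, t k * conj (t (k + u)) + (z * conj (t u) + t (-u) * conj z) := by
  rw [← sub_eq_iff_eq_add', ← sum_sub_distrib,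
    Fintype.sum_eq_add 0 (-u) (neg_ne_zero.mpr hu).symm]
  · simp [hu, ht]
  · rintro k ⟨hk0, hku⟩
    have : k + u ≠ 0 := fun h => hku (eq_neg_of_add_eq_zero_left h)
    simp [hk0, this]

theorem sum_update_zero_I_mul_conj_shift (t : ZMod N → ℤ) (ht : t 0 = 0) {u : ZMod N}
    (hu : u ≠ 0) (hsymm : t (-u) = t u) :
    ∑ k, update (fun k => (t k : ℂ)) 0 Complex.I k *
        conj (update (fun k => (t k : ℂ)) 0 Complex.I (k + u)) =
      ∑ k, ((t k * t (k + u) : ℤ) : ℂ) := by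
  rw [sum_update_zero_mul_conj_shift _ (by simp [ht]) _ hu, hsymm]
  simp only [map_intCast, Complex.conj_I, Int.cast_mul]
  ring

end Autocorrelation

section QuadraticChar

variable {F : Type*} [Field F] [Fintype F]

theorem ringChar_ne_two_of_card_mod_four (h4 : Fintype.card F % 4 = 1) : ringChar F ≠ 2 :=
  fun h => by
    have := FiniteField.even_card_of_char_two h
    omega

variable [DecidableEq F]

theorem quadraticChar_neg_of_card_mod_four (h4 : Fintype.card F % 4 = 1) (x : F) :
    quadraticChar F (-x) = quadraticChar F x := by
  rw [neg_eq_neg_one_mul, map_mul, quadraticChar_neg_one (ringChar_ne_two_of_card_mod_four h4),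
    ZMod.χ₄_nat_one_mod_four h4, one_mul]

theorem quadraticChar_inv_sub_one_of_card_mod_four (h4 : Fintype.card F % 4 = 1) {x : F}
    (hx : quadraticChar F x = 1) : quadraticChar F (x⁻¹ - 1) = quadraticChar F (x - 1) := by
  have hx0 : x ≠ 0 := by rintro rfl; simp at hx
  have : x⁻¹ - 1 = -x * (x - 1) * x⁻¹ ^ 2 := by field_simp; ring
  rw [this, map_mul, map_mul, quadraticChar_sq_one' (inv_ne_zero hx0), mul_one,
    quadraticChar_neg_of_card_mod_four h4, hx, one_mul]

theorem quadraticChar_sq_pow {g : F} (hg : g ≠ 0) (n : ℕ) : quadraticChar F ((g ^ 2) ^ n) = 1 := by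
  rw [pow_right_comm]
  exact quadraticChar_sq_one' (pow_ne_zero _ hg)

theorem quadraticChar_sum_mul_sub_one (hF : ringChar F ≠ 2) {c : F} (hc0 : c ≠ 0) (hc1 : c ≠ 1) :
    ∑ x, quadraticChar F (x - 1) * quadraticChar F (x * c - 1) = -quadraticChar F c := by
  set χ := quadraticChar F
  have hw : (c - 1) / c ≠ 0 := div_ne_zero (sub_ne_zero.mpr hc1) hc0
  -- substituting `x = 1 - (c - 1) / c * y` turns the sum into `χ(-c) J(χ, χ)`
  have hsubst : ∀ y, χ ((1 - (c - 1) / c * y) - 1) * χ ((1 - (c - 1) / c * y) * c - 1) =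
      χ (-c) * (χ y * χ (1 - y)) := by
    intro y
    have : (1 - (c - 1) / c * y - 1) * ((1 - (c - 1) / c * y) * c - 1) =
        -c * ((c - 1) / c) ^ 2 * (y * (1 - y)) := by field_simp; ring
    rw [← map_mul, this, map_mul, map_mul, quadraticChar_sq_one' hw, mul_one, map_mul]
  have hJ : ∑ y, χ y * χ (1 - y) = -χ (-1) := by
    have := jacobiSum_nontrivial_inv (quadraticChar_ne_one hF)
    rwa [(quadraticChar_isQuadratic F).inv, jacobiSum] at this
  rw [← ((Equiv.mulLeft₀ _ hw).trans (Equiv.subLeft 1)).sum_comp]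
  simp only [Equiv.trans_apply, Equiv.mulLeft₀_apply, Equiv.subLeft_apply, hsubst]
  rw [← mul_sum, hJ, neg_eq_neg_one_mul c, map_mul, mul_neg, mul_comm, ← mul_assoc, ← sq,
    quadraticChar_sq_one (neg_ne_zero.mpr one_ne_zero), one_mul]

theorem quadraticChar_sum_erase_zero_mul_sub_one (hF : ringChar F ≠ 2) {c : F} (hc0 : c ≠ 0)
    (hc1 : c ≠ 1) :
    ∑ x ∈ univ.erase 0, quadraticChar F (x - 1) * quadraticChar F (x * c - 1) =
      -quadraticChar F c - 1 := by
  rw [sum_erase_eq_sub (mem_univ 0), quadraticChar_sum_mul_sub_one hF hc0 hc1, zero_mul, ← sq,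
    quadraticChar_sq_one (by simp)]

theorem quadraticChar_sum_pow_sub_one_mul_shift (hF : ringChar F ≠ 2) {g : F}
    (hg : orderOf g = Fintype.card F - 1) {N : ℕ} [NeZero N]
    (hcard : Fintype.card F = 2 * N + 1) {u : ZMod N} (hu : u ≠ 0) :
    ∑ k : ZMod N,
      (quadraticChar F ((g ^ 2) ^ k.val - 1) * quadraticChar F ((g ^ 2) ^ (k + u).val - 1) +
        quadraticChar F ((g ^ 2) ^ k.val * g - 1) *
          quadraticChar F ((g ^ 2) ^ (k + u).val * g - 1)) = -2 := by
  have hg0 := ne_zero_of_orderOf_eq_card_sub_one hg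
  have hg2 := sq_pow_eq_one_of_orderOf_eq_card_sub_one hg hcard
  have hc1 : (g ^ 2) ^ u.val ≠ 1 := by
    have := (ZMod.val_ne_zero u).mpr hu
    rw [← pow_mul]
    exact pow_ne_one_of_lt_orderOf (by omega) (by have := ZMod.val_lt u; omega)
  have hsum := quadraticChar_sum_erase_zero_mul_sub_one hF (pow_ne_zero _ (pow_ne_zero _ hg0)) hc1
  rw [sum_erase_zero_eq_sum_zmod_pow hg hcard, quadraticChar_sq_pow hg0] at hsum
  simp only [ZMod.pow_val_add hg2, mul_right_comm _ ((g ^ 2) ^ u.val) g]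
  rw [hsum]
  norm_num

end QuadraticChar

open Finset Complex in
/-- First construction (Theorem 1(ii)): for an odd prime power `q ≡ 1 (mod 4)`, with
`g` a primitive element of `GF(q)` and `χ` the extended quadratic character, the
length-`(q-1)/2` sequences `a` (with `a_0 = i`, `a_k = χ(g^{2k}-1)` otherwise) and
`b` (with `b_k = χ(g^{2k+1}-1)`) form a quaternary Legendre pair. -/
theorem first_construction_q1mod4 (F : Type*) [Field F] [Fintype F] [DecidableEq F]
    (N : ℕ) [NeZero N] (hcard : Fintype.card F = 2 * N + 1)
    (hq4 : Fintype.card F % 4 = 1)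
    (g : F) (hg : orderOf g = Fintype.card F - 1)
    (χ : F → ℤ)
    (hχ : ∀ α : F, χ α = if α = 0 then 0 else if IsSquare α then 1 else -1)
    (a b : ZMod N → ℂ)
    (ha0 : a 0 = I)
    (ha : ∀ k : ZMod N, k ≠ 0 → a k = (χ (g ^ (2 * k.val) - 1) : ℤ))
    (hb : ∀ k : ZMod N, b k = (χ (g ^ (2 * k.val + 1) - 1) : ℤ)) :
    ∀ u : ZMod N, u ≠ 0 →
      (∑ k : ZMod N, a k * (starRingEnd ℂ) (a (k + u))) +
        ∑ k : ZMod N, b k * (starRingEnd ℂ) (b (k + u)) = -2 := by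
  intro u hu
  obtain rfl : χ = quadraticChar F := funext fun α => by
    rw [hχ, quadraticChar_apply, quadraticCharFun]
  set t : ZMod N → ℤ := fun k => quadraticChar F ((g ^ 2) ^ k.val - 1)
  have hat : a = Function.update (fun k => (t k : ℂ)) 0 I := by
    funext k
    by_cases hk : k = 0
    · simp [hk, ha0]
    · simp [hk, ha k hk, t, pow_mul]
  have hbt : b = fun k : ZMod N => ((quadraticChar F ((g ^ 2) ^ k.val * g - 1) : ℤ) : ℂ) := by
    funext k
    rw [hb, pow_succ, pow_mul]
  have hsymm : t (-u) = t u := by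
    simp only [t]
    rw [ZMod.pow_val_neg (sq_pow_eq_one_of_orderOf_eq_card_sub_one hg hcard),
      quadraticChar_inv_sub_one_of_card_mod_four hq4
        (quadraticChar_sq_pow (ne_zero_of_orderOf_eq_card_sub_one hg) _)]
  rw [hat, hbt, sum_update_zero_I_mul_conj_shift t (by simp [t]) hu hsymm, ← sum_add_distrib]
  simp only [t, map_intCast]
  exact_mod_cast quadraticChar_sum_pow_sub_one_mul_shift (ringChar_ne_two_of_card_mod_four hq4) hg
    hcard hu
end

section
/- Let p be an odd prime, χ the Legendre symbol mod p extended by χ(0)=0. Define the length-2p binary sequence y by y_0 = 1, y_p = -1, and y_k = χ(k mod p) for 0 < k < 2p with k ≠ p. Then R_y(p) = 2p - 4 and R_y(u) = -2 for all u with 0 < u < 2p and u ≠ p. -/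
/-!
Away from the positions `0` and `p`, `y` is the pull-back `χ ∘ φ` of the Legendre symbol along
`φ : ZMod (2p) → ZMod p`, so `y = χ ∘ φ + δ` with `δ = 𝟙₀ - 𝟙ₚ`. As `χ ∘ φ` is `p`-periodic and `δ`
takes opposite values at `0` and `p`, the cross terms of the autocorrelation cancel, leaving
`R_y(u) = 2 ∑ₜ χ(t) χ(t + u) + δ(u) - δ(u + p)`. When `p ∤ u`, substituting `t = -u x` turns the
character sum into `χ(-1) J(χ, χ⁻¹) = -1`; when `p ∣ u` it is `p - 1`.
-/

open Finset

namespace MulChar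

variable {F R : Type*} [Field F] [Fintype F] [CommRing R]

theorem sum_mul_inv_apply_add_of_ne_zero [IsDomain R] {χ : MulChar F R} (hχ : χ ≠ 1) {a : F}
    (ha : a ≠ 0) : ∑ t, χ t * χ⁻¹ (t + a) = -1 := by
  have hterm (x : F) : χ (-a * x) * χ⁻¹ (-a * x + a) = χ (-1) * (χ x * χ⁻¹ (1 - x)) := by
    simp only [inv_apply', ← map_mul]
    congr 1
    rw [show -a * x + a = a * (1 - x) by ring, mul_inv]
    field_simp
  calc ∑ t, χ t * χ⁻¹ (t + a)
      = ∑ x, χ (-a * x) * χ⁻¹ (-a * x + a) :=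
        (Equiv.sum_comp (Equiv.mulLeft₀ (-a) (neg_ne_zero.mpr ha)) _).symm
    _ = χ (-1) * jacobiSum χ χ⁻¹ := by simp only [hterm, ← mul_sum, jacobiSum]
    _ = -1 := by rw [jacobiSum_nontrivial_inv hχ, mul_neg, ← map_mul, neg_one_mul, neg_neg,
        map_one]

theorem sum_mul_inv_apply (χ : MulChar F R) : ∑ t, χ t * χ⁻¹ t = Fintype.card F - 1 := by
  classical
  simp only [← mul_apply, mul_inv_cancel, sum_one_eq_card_units,
    Fintype.card_eq_card_units_add_one F]
  push_cast; ring

end MulChar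

theorem quadraticChar_sum_mul_apply_add {F : Type*} [Field F] [Fintype F] [DecidableEq F]
    (hF : ringChar F ≠ 2) (a : F) :
    ∑ t, quadraticChar F t * quadraticChar F (t + a) =
      if a = 0 then (Fintype.card F : ℤ) - 1 else -1 := by
  nth_rw 2 [← (quadraticChar_isQuadratic F).inv]
  split_ifs with ha
  · simpa [ha] using MulChar.sum_mul_inv_apply (quadraticChar F)
  · exact MulChar.sum_mul_inv_apply_add_of_ne_zero (quadraticChar_ne_one hF) ha

namespace ZMod

theorem sum_castHom_comp {m n : ℕ} [NeZero m] [NeZero n] (h : m.Coprime n) {M : Type*}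
    [AddCommMonoid M] (g : ZMod n → M) :
    ∑ k : ZMod (m * n), g (castHom (dvd_mul_left n m) (ZMod n) k) = m • ∑ t, g t := by
  let e := chineseRemainder h
  have hcast : castHom (dvd_mul_left n m) (ZMod n) = (RingHom.snd _ _).comp e.toRingHom :=
    RingHom.ext_zmod _ _
  rw [hcast]
  calc ∑ k : ZMod (m * n), g ((RingHom.snd _ _).comp e.toRingHom k)
      = ∑ x : ZMod m × ZMod n, g x.2 := Equiv.sum_comp e.toEquiv (fun x => g x.2)
    _ = m • ∑ t, g t := by
        simp only [Fintype.sum_prod_type, sum_const, card_univ, ZMod.card]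

theorem castHom_two_mul_eq_zero_iff {n : ℕ} [NeZero n] {u : ZMod (2 * n)} :
    castHom (dvd_mul_left n 2) (ZMod n) u = 0 ↔ u = 0 ∨ u = n := by
  have hn : 0 < n := Nat.pos_of_neZero n
  have hu : u.val < 2 * n := val_lt u
  rw [castHom_apply, ← natCast_val, natCast_eq_zero_iff, ← val_eq_zero,
    ← val_injective _ |>.eq_iff, val_natCast_of_lt (by omega : n < 2 * n)]
  constructor
  · rintro ⟨c, hc⟩
    have : c < 2 := by nlinarith
    interval_cases c <;> simp_all
  · rintro (h | h) <;> simp [h]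

end ZMod

theorem sum_quadraticChar_castHom_mul_add {m n : ℕ} [NeZero m] [Fact n.Prime] (hn : n ≠ 2)
    (h : m.Coprime n) (u : ZMod (m * n)) :
    let φ := ZMod.castHom (dvd_mul_left n m) (ZMod n)
    ∑ k, quadraticChar (ZMod n) (φ k) * quadraticChar (ZMod n) (φ (k + u)) =
      m * if φ u = 0 then (n : ℤ) - 1 else -1 := by
  intro φ
  simp only [map_add]
  rw [ZMod.sum_castHom_comp h fun t => quadraticChar (ZMod n) t * quadraticChar (ZMod n) (t + φ u),
    quadraticChar_sum_mul_apply_add (by rwa [ZMod.ringChar_zmod_n]), ZMod.card, nsmul_eq_mul]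

section Autocorrelation

variable {G R : Type*} [AddCommGroup G] [Fintype G] [DecidableEq G] [CommRing R]

theorem sum_mul_shift_add_single_sub_single {f : G → R} {P : G} (hf : ∀ k, f (k + P) = f k)
    (u : G) :
    let d : G → R := Pi.single 0 1 - Pi.single P 1
    ∑ k, (f k + d k) * (f (k + u) + d (k + u)) = ∑ k, f k * f (k + u) + (d u - d (P + u)) := by
  intro d
  have hd (g : G → R) : ∑ k, d k * g k = g 0 - g P := by
    simp [d, Pi.single_apply, sub_mul, sum_sub_distrib]
  have hd_shift (g : G → R) : ∑ k, g k * d (k + u) = g (-u) - g (P - u) := by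
    simp [d, Pi.single_apply, mul_sub, sum_sub_distrib, ← eq_sub_iff_add_eq]
  have hcross_left : ∑ k, d k * f (k + u) = 0 := by
    rw [hd (fun k => f (k + u)), zero_add, add_comm, hf, sub_self]
  have hcross_right : ∑ k, f k * d (k + u) = 0 := by
    rw [hd_shift, sub_eq_add_neg P, add_comm P, hf, sub_self]
  have hdd : ∑ k, d k * d (k + u) = d u - d (P + u) := by
    rw [hd (fun k => d (k + u)), zero_add]
  simp only [add_mul, mul_add, sum_add_distrib, hcross_left, hcross_right, hdd]
  ring

end Autocorrelation

open Finset in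
theorem doubled_legendre_autocorrelation_general (p : ℕ) [Fact p.Prime] (hodd : Odd p)
    [NeZero (2 * p)]
    (χ : ZMod p → ℤ)
    (hχ : ∀ α : ZMod p, χ α = if α = 0 then 0 else if IsSquare α then 1 else -1)
    (y : ZMod (2 * p) → ℤ)
    (hy0 : y 0 = 1) (hyp : y (p : ZMod (2 * p)) = -1)
    (hy : ∀ k : ZMod (2 * p), k ≠ 0 → k ≠ (p : ZMod (2 * p)) →
      y k = χ ((k.val : ZMod p))) :
    (∑ k : ZMod (2 * p), y k * y (k + (p : ZMod (2 * p)))) = 2 * p - 4 ∧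
      ∀ u : ZMod (2 * p), u ≠ 0 → u ≠ (p : ZMod (2 * p)) →
        ∑ k : ZMod (2 * p), y k * y (k + u) = -2 := by
  have hp : p.Prime := Fact.out
  set φ := ZMod.castHom (dvd_mul_left p 2) (ZMod p)
  set P : ZMod (2 * p) := (p : ZMod (2 * p))
  set d : ZMod (2 * p) → ℤ := Pi.single 0 1 - Pi.single P 1
  have hχ_eq : χ = quadraticChar (ZMod p) :=
    funext fun α => by rw [hχ, quadraticChar_apply, quadraticCharFun]
  have hχ0 : χ 0 = 0 := by rw [hχ_eq, quadraticChar_zero]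
  have hφP : φ P = 0 := ZMod.castHom_two_mul_eq_zero_iff.mpr (Or.inr rfl)
  have hP0 : P ≠ 0 := by
    rw [Ne, ZMod.natCast_eq_zero_iff]
    exact Nat.not_dvd_of_pos_of_lt hp.pos (by linarith [hp.pos])
  have hPP : P + P = 0 := by rw [← Nat.cast_add, ← two_mul, ZMod.natCast_self]
  have hy_eq (k : ZMod (2 * p)) : y k = χ (φ k) + d k := by
    simp only [d, Pi.sub_apply]
    by_cases hk0 : k = 0
    · rw [hk0, hy0, map_zero, hχ0, Pi.single_eq_same, Pi.single_eq_of_ne hP0.symm]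
      norm_num
    by_cases hkP : k = P
    · rw [hkP, hyp, hφP, hχ0, Pi.single_eq_same, Pi.single_eq_of_ne hP0]
      norm_num
    rw [hy k hk0 hkP, Pi.single_eq_of_ne hk0, Pi.single_eq_of_ne hkP, sub_zero, add_zero,
      ZMod.castHom_apply, ZMod.cast_eq_val]
  have hR (u : ZMod (2 * p)) : ∑ k, y k * y (k + u) =
      2 * (if φ u = 0 then (p : ℤ) - 1 else -1) + (d u - d (P + u)) := by
    simp only [hy_eq]
    rw [sum_mul_shift_add_single_sub_single (fun k => by rw [map_add, hφP, add_zero]) u, hχ_eq,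
      sum_quadraticChar_castHom_mul_add (by rintro rfl; norm_num at hodd)
        (Nat.coprime_two_left.mpr hodd), Nat.cast_ofNat]
  constructor
  · rw [hR, if_pos hφP]
    simp [d, hPP, hP0]
    ring
  · intro u hu0 huP
    have hφu : φ u ≠ 0 := fun h => (ZMod.castHom_two_mul_eq_zero_iff.mp h).elim hu0 huP
    have hPu0 : P + u ≠ 0 := fun h =>
      huP (by rw [← neg_eq_of_add_eq_zero_left hPP]; exact eq_neg_of_add_eq_zero_right h)
    rw [hR, if_neg hφu]
    simp [d, hu0, huP, hPu0]

open Finset in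
/-- Proposition (second construction): the length-`2p` binary sequence `y` with
`y_0 = 1`, `y_p = -1`, and `y_k = χ(k mod p)` otherwise satisfies `R_y(p) = 2p - 4`
and `R_y(u) = -2` for `u ∉ {0, p}`. -/
theorem doubled_legendre_autocorrelation (p : ℕ) [Fact p.Prime] (hodd : Odd p)
    [NeZero (2 * p)]
    (χ : ZMod p → ℤ)
    (hχ : ∀ α : ZMod p, χ α = if α = 0 then 0 else if IsSquare α then 1 else -1)
    (y : ZMod (2 * p) → ℤ)
    (hy0 : y 0 = 1) (hyp : y (p : ZMod (2 * p)) = -1)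
    (hy : ∀ k : ZMod (2 * p), k ≠ 0 → k ≠ (p : ZMod (2 * p)) →
      y k = χ ((k.val : ZMod p)))
    (hybin : ∀ k, y k = 1 ∨ y k = -1) :
    (∑ k : ZMod (2 * p), y k * y (k + (p : ZMod (2 * p)))) = 2 * p - 4 ∧
      ∀ u : ZMod (2 * p), u ≠ 0 → u ≠ (p : ZMod (2 * p)) →
        ∑ k : ZMod (2 * p), y k * y (k + u) = -2 :=
  doubled_legendre_autocorrelation_general p hodd χ hχ y hy0 hyp hy
end

section
/- Let p be an odd prime and suppose a = (a_k) and b = (b_k) are symmetric complementary ternary sequences of length p (values in {0, ±1}) whose only zero entry is a_0. Define length-2p binary sequences w, x by w_0 = w_p = 1, w_k = (-1)^k · a_{k mod p} for 0 < k < 2p with k ≠ p, and x_k = (-1)^k · b_{k mod p} for 0 ≤ k < 2p. Then w and x are symmetric binary sequences satisfying R_w(p) + R_x(p) = 4 - 4p and R_w(u) + R_x(u) = 0 for all u with 0 < u < 2p, u ≠ p. -/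
private lemma negOnePow_mod_two (m : ℕ) : ((-1:ℤ))^m = (-1)^(m % 2) := by
  conv_lhs => rw [← Nat.div_add_mod m 2]
  rw [pow_add, pow_mul]
  norm_num

open Finset in
/-- Proposition W1 (core computation): from symmetric complementary ternary sequences
`a, b` of odd prime length `p` whose only zero is `a_0`, the doubled length-`2p`
binary sequences `w, x` are symmetric and satisfy `R_w(p)+R_x(p) = 4-4p` and
`R_w(u)+R_x(u) = 0` for `u ∉ {0,p}`. -/
theorem doubling_construction (p : ℕ) [Fact p.Prime] (hodd : Odd p) [NeZero (2 * p)]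
    (a b : ZMod p → ℤ)
    (ha0 : a 0 = 0)
    (haval : ∀ k : ZMod p, k ≠ 0 → a k = 1 ∨ a k = -1)
    (hbval : ∀ k : ZMod p, b k = 1 ∨ b k = -1)
    (hasym : ∀ k : ZMod p, k ≠ 0 → a k = a (-k))
    (hbsym : ∀ k : ZMod p, k ≠ 0 → b k = b (-k))
    (hcomp : ∀ u : ZMod p, u ≠ 0 →
      (∑ k : ZMod p, a k * a (k + u)) + ∑ k : ZMod p, b k * b (k + u) = 0)
    (w x : ZMod (2 * p) → ℤ)
    (hw0 : w 0 = 1) (hwp : w (p : ZMod (2 * p)) = 1)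
    (hw : ∀ k : ZMod (2 * p), k ≠ 0 → k ≠ (p : ZMod (2 * p)) →
      w k = (-1) ^ k.val * a ((k.val : ZMod p)))
    (hx : ∀ k : ZMod (2 * p), x k = (-1) ^ k.val * b ((k.val : ZMod p))) :
    ((∀ k : ZMod (2 * p), k ≠ 0 → w k = w (-k)) ∧
      ∀ k : ZMod (2 * p), k ≠ 0 → x k = x (-k)) ∧
    ((∑ k : ZMod (2 * p), w k * w (k + (p : ZMod (2 * p)))) +
        (∑ k : ZMod (2 * p), x k * x (k + (p : ZMod (2 * p)))) = 4 - 4 * p) ∧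
    (∀ u : ZMod (2 * p), u ≠ 0 → u ≠ (p : ZMod (2 * p)) →
      (∑ k : ZMod (2 * p), w k * w (k + u)) + ∑ k : ZMod (2 * p), x k * x (k + u) = 0) := by
  have hp : p.Prime := Fact.out
  have hppos : 0 < p := hp.pos
  have hplt : p < 2*p := by omega
  have hsq : ∀ m : ℕ, ((-1:ℤ))^m * (-1)^m = 1 := by
    intro m; rw [← mul_pow]; norm_num
  have hεadd : ∀ k u : ZMod (2*p), ((-1:ℤ))^(k+u).val = (-1)^k.val * (-1)^u.val := by
    intro k u
    rw [negOnePow_mod_two, ZMod.val_add, Nat.mod_mod_of_dvd _ ⟨p, rfl⟩,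
      ← negOnePow_mod_two, pow_add]
  have hεneg : ∀ k : ZMod (2*p), ((-1:ℤ))^((-k).val) = (-1)^k.val := by
    intro k
    have h := hεadd (-k) k
    rw [neg_add_cancel, ZMod.val_zero, pow_zero] at h
    rcases neg_one_pow_eq_or ℤ (-k).val with h1 | h1 <;>
      rcases neg_one_pow_eq_or ℤ k.val with h2 | h2 <;>
      rw [h1, h2] at h ⊢ <;> linarith
  have hcadd : ∀ k u : ZMod (2*p), (((k+u).val : ℕ) : ZMod p)
      = ((k.val : ZMod p)) + ((u.val : ZMod p)) := by
    intro k u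
    rw [ZMod.val_add]
    have h2 : ((((k.val + u.val) % (2*p)) : ℕ) : ZMod p) = ((k.val + u.val : ℕ) : ZMod p) := by
      conv_rhs => rw [← Nat.div_add_mod (k.val + u.val) (2*p)]
      push_cast
      simp
    rw [h2]; push_cast; ring
  have hc0 : (((0 : ZMod (2*p)).val : ℕ) : ZMod p) = 0 := by
    rw [ZMod.val_zero]; norm_num
  have hcneg : ∀ k : ZMod (2*p), (((-k).val : ℕ) : ZMod p) = -((k.val : ZMod p)) := by
    intro k
    have h := hcadd k (-k)
    rw [add_neg_cancel, hc0] at h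
    linear_combination -h
  have hvp : ((p : ZMod (2*p))).val = p := by
    rw [ZMod.val_natCast]; exact Nat.mod_eq_of_lt hplt
  have hεp : ((-1:ℤ))^((p : ZMod (2*p)).val) = -1 := by
    rw [hvp]; exact Odd.neg_one_pow hodd
  have hcp : (((p : ZMod (2*p)).val : ℕ) : ZMod p) = 0 := by
    rw [hvp]; exact ZMod.natCast_self p
  have hpne0 : (p : ZMod (2*p)) ≠ 0 := by
    intro h
    have := hvp
    rw [h, ZMod.val_zero] at this
    omega
  have hpp0 : (p : ZMod (2*p)) + p = 0 := by
    have h := ZMod.natCast_self (2*p)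
    push_cast at h
    linear_combination h
  have hnegp : -(p : ZMod (2*p)) = p := neg_eq_of_add_eq_zero_left hpp0
  have hker : ∀ k : ZMod (2*p), ((k.val : ZMod p) = 0) ↔ (k = 0 ∨ k = (p : ZMod (2*p))) := by
    intro k
    constructor
    · intro h
      rw [ZMod.natCast_eq_zero_iff] at h
      obtain ⟨c, hc⟩ := h
      have hlt : k.val < 2*p := ZMod.val_lt k
      have hc2 : c = 0 ∨ c = 1 := by
        rcases Nat.lt_or_ge c 2 with h | h
        · omega
        · exfalso
          have : 2*p ≤ p*c := by nlinarith
          omega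
      rcases hc2 with rfl | rfl
      · left
        rw [← ZMod.val_eq_zero]; omega
      · right
        have : k.val = p := by omega
        calc k = ((k.val : ℕ) : ZMod (2*p)) := (ZMod.natCast_rightInverse k).symm
          _ = (p : ZMod (2*p)) := by rw [this]
    · rintro (rfl | rfl)
      · exact hc0
      · exact hcp
  have key : ∀ g : ZMod p → ℤ,
      (∑ k : ZMod (2*p), g ((k.val : ZMod p))) = 2 * ∑ j : ZMod p, g j := by
    intro g
    rw [← Finset.sum_fiberwise Finset.univ (fun k : ZMod (2*p) => ((k.val : ZMod p)))
      (fun k => g ((k.val : ZMod p))), Finset.mul_sum]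
    apply Finset.sum_congr rfl
    intro j _
    have hk0v : ((((j.val : ZMod (2*p))).val : ℕ) : ZMod p) = j := by
      rw [ZMod.val_natCast, Nat.mod_eq_of_lt (lt_trans (ZMod.val_lt j) hplt)]
      exact ZMod.natCast_rightInverse j
    have hfib : Finset.univ.filter (fun k : ZMod (2*p) => ((k.val : ZMod p)) = j)
        = {(j.val : ZMod (2*p)), (j.val : ZMod (2*p)) + p} := by
      ext k
      simp only [Finset.mem_filter, Finset.mem_univ, true_and, Finset.mem_insert,
        Finset.mem_singleton]
      constructor
      · intro hk
        have hthis := hcadd (k - (j.val : ZMod (2*p))) ((j.val : ZMod (2*p)))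
        rw [sub_add_cancel, hk, hk0v] at hthis
        have hd : (((k - (j.val : ZMod (2*p))).val : ℕ) : ZMod p) = 0 := by
          linear_combination -hthis
        rcases (hker _).mp hd with h | h
        · left; exact sub_eq_zero.mp h
        · right
          rw [sub_eq_iff_eq_add.mp h, add_comm]
      · rintro (rfl | rfl)
        · exact hk0v
        · rw [hcadd, hk0v, hcp, add_zero]
    rw [hfib, Finset.sum_pair]
    · rw [hcadd, hcp, add_zero, hk0v]; ring
    · intro h
      apply hpne0
      linear_combination -h
  have hckne : ∀ k : ZMod (2*p), k ≠ 0 → k ≠ (p : ZMod (2*p)) → ((k.val : ZMod p)) ≠ 0 := by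
    intro k h1 h2 h
    rcases (hker k).mp h with h' | h'
    · exact h1 h'
    · exact h2 h'
  have hxterm : ∀ k u : ZMod (2*p), x k * x (k+u)
      = (-1)^u.val * (b ((k.val : ZMod p)) * b ((k.val : ZMod p) + ((u.val : ZMod p)))) := by
    intro k u
    rw [hx k, hx (k+u), hεadd, hcadd]
    linear_combination ((-1:ℤ)^u.val *
      (b ((k.val : ZMod p)) * b ((k.val : ZMod p) + ((u.val : ZMod p))))) * hsq k.val
  have hwterm : ∀ k u : ZMod (2*p), k ≠ 0 → k ≠ (p:ZMod (2*p)) → k + u ≠ 0 →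
      k + u ≠ (p:ZMod (2*p)) →
      w k * w (k+u)
        = (-1)^u.val * (a ((k.val : ZMod p)) * a ((k.val : ZMod p) + ((u.val : ZMod p)))) := by
    intro k u h1 h2 h3 h4
    rw [hw k h1 h2, hw (k+u) h3 h4, hεadd, hcadd]
    linear_combination ((-1:ℤ)^u.val *
      (a ((k.val : ZMod p)) * a ((k.val : ZMod p) + ((u.val : ZMod p))))) * hsq k.val
  refine ⟨⟨?_, ?_⟩, ?_, ?_⟩
  · -- w symmetric
    intro k hk0
    by_cases hkp : k = (p : ZMod (2*p))
    · rw [hkp, hnegp]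
    · have hnk0 : -k ≠ 0 := neg_ne_zero.mpr hk0
      have hnkp : -k ≠ (p : ZMod (2*p)) := by
        intro h; apply hkp; rw [← neg_neg k, h, hnegp]
      rw [hw k hk0 hkp, hw (-k) hnk0 hnkp, hεneg, hcneg, ← hasym _ (hckne k hk0 hkp)]
  · -- x symmetric
    intro k hk0
    by_cases hkp : k = (p : ZMod (2*p))
    · rw [hkp, hnegp]
    · rw [hx k, hx (-k), hεneg, hcneg, ← hbsym _ (hckne k hk0 hkp)]
  · -- u = p
    have hxsum : (∑ k : ZMod (2*p), x k * x (k + (p:ZMod (2*p)))) = -(2*(p:ℤ)) := by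
      have hterm : ∀ k : ZMod (2*p), x k * x (k + (p:ZMod (2*p))) = -1 := by
        intro k
        rw [hxterm k (p:ZMod (2*p)), hεp, hcp, add_zero]
        rcases hbval ((k.val : ZMod p)) with h | h <;> rw [h] <;> norm_num
      rw [Finset.sum_congr rfl (fun k _ => hterm k), Finset.sum_const, Finset.card_univ,
        ZMod.card, nsmul_eq_mul]
      push_cast; ring
    have hwsum : (∑ k : ZMod (2*p), w k * w (k + (p:ZMod (2*p)))) = -(2*(p:ℤ)) + 4 := by
      have hsplit : ∀ k : ZMod (2*p), w k * w (k + (p:ZMod (2*p)))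
          = -1 + (w k * w (k + (p:ZMod (2*p))) + 1) := fun k => by ring
      rw [Finset.sum_congr rfl (fun k _ => hsplit k), Finset.sum_add_distrib,
        Finset.sum_const, Finset.card_univ, ZMod.card, nsmul_eq_mul]
      have hzero : ∀ k ∈ Finset.univ, k ∉ ({0, (p:ZMod (2*p))} : Finset (ZMod (2*p))) →
          w k * w (k + (p:ZMod (2*p))) + 1 = 0 := by
        intro k _ hk
        simp only [Finset.mem_insert, Finset.mem_singleton, not_or] at hk
        obtain ⟨hk0, hkp⟩ := hk
        have h3 : k + (p:ZMod (2*p)) ≠ 0 := by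
          intro h; apply hkp
          have h' : k = -(p:ZMod (2*p)) := by linear_combination h
          rw [h', hnegp]
        have h4 : k + (p:ZMod (2*p)) ≠ (p:ZMod (2*p)) := by
          intro h; apply hk0; linear_combination h
        rw [hwterm k _ hk0 hkp h3 h4, hεp, hcp, add_zero]
        rcases haval _ (hckne k hk0 hkp) with h | h <;> rw [h] <;> norm_num
      rw [← Finset.sum_subset (Finset.subset_univ ({0, (p:ZMod (2*p))} : Finset (ZMod (2*p))))
        hzero]
      rw [Finset.sum_pair (Ne.symm hpne0), zero_add, hpp0, hw0, hwp]
      push_cast; ring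
    rw [hwsum, hxsum]
    ring
  · -- generic u
    intro u hu0 hup
    have hv : ((u.val : ZMod p)) ≠ 0 := hckne u hu0 hup
    have hxsum : (∑ k : ZMod (2*p), x k * x (k + u))
        = (-1)^u.val * (2 * ∑ j : ZMod p, b j * b (j + ((u.val : ZMod p)))) := by
      rw [Finset.sum_congr rfl (fun k _ => hxterm k u), ← Finset.mul_sum,
        key (fun j => b j * b (j + ((u.val : ZMod p))))]
    have hnu0 : -u ≠ 0 := neg_ne_zero.mpr hu0
    have hnup : -u ≠ (p:ZMod (2*p)) := by
      intro h; apply hup; rw [← neg_neg u, h, hnegp]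
    have hpu0 : (p:ZMod (2*p)) + -u ≠ 0 := by
      intro h; apply hup; linear_combination -h
    have hpup : (p:ZMod (2*p)) + -u ≠ (p:ZMod (2*p)) := by
      intro h; apply hu0; linear_combination -h
    have hq0 : (p:ZMod (2*p)) + u ≠ 0 := by
      intro h; apply hup
      rw [show u = -(p:ZMod (2*p)) by linear_combination h, hnegp]
    have hqp : (p:ZMod (2*p)) + u ≠ (p:ZMod (2*p)) := by
      intro h; exact hu0 (by linear_combination h)
    have d01 : (0 : ZMod (2*p)) ≠ (p:ZMod (2*p)) := Ne.symm hpne0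
    have d02 : (0 : ZMod (2*p)) ≠ -u := Ne.symm hnu0
    have d03 : (0 : ZMod (2*p)) ≠ (p:ZMod (2*p)) + -u := Ne.symm hpu0
    have d12 : (p:ZMod (2*p)) ≠ -u := fun h => hnup h.symm
    have d13 : (p:ZMod (2*p)) ≠ (p:ZMod (2*p)) + -u := by
      intro h; apply hu0; linear_combination h
    have d23 : -u ≠ (p:ZMod (2*p)) + -u := by
      intro h; apply hpne0; linear_combination -h
    have hwsum : (∑ k : ZMod (2*p), w k * w (k + u))
        = (-1)^u.val * (2 * ∑ j : ZMod p, a j * a (j + ((u.val : ZMod p)))) := by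
      have hsplit : ∀ k : ZMod (2*p), w k * w (k + u)
          = (-1)^u.val * (a ((k.val : ZMod p)) * a ((k.val : ZMod p) + ((u.val : ZMod p))))
            + (w k * w (k + u)
              - (-1)^u.val * (a ((k.val : ZMod p)) * a ((k.val : ZMod p) + ((u.val : ZMod p))))) :=
        fun k => by ring
      rw [Finset.sum_congr rfl (fun k _ => hsplit k), Finset.sum_add_distrib,
        ← Finset.mul_sum, key (fun j => a j * a (j + ((u.val : ZMod p))))]
      have hzero : ∀ k ∈ Finset.univ,
          k ∉ ({0, (p:ZMod (2*p)), -u, (p:ZMod (2*p)) + -u} : Finset (ZMod (2*p))) →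
          w k * w (k + u)
            - (-1)^u.val * (a ((k.val : ZMod p)) * a ((k.val : ZMod p) + ((u.val : ZMod p)))) = 0 := by
        intro k _ hk
        simp only [Finset.mem_insert, Finset.mem_singleton, not_or] at hk
        obtain ⟨hk0, hkp, hknu, hkpu⟩ := hk
        have h3 : k + u ≠ 0 := by
          intro h; apply hknu; linear_combination h
        have h4 : k + u ≠ (p:ZMod (2*p)) := by
          intro h; apply hkpu; linear_combination h
        rw [hwterm k u hk0 hkp h3 h4]; ring
      rw [← Finset.sum_subset (Finset.subset_univ _) hzero]
      rw [Finset.sum_insert (by simp [d01, d02, d03]),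
        Finset.sum_insert (by simp [d12, d13]),
        Finset.sum_insert (by simp [d23]),
        Finset.sum_singleton]
      have eA : (0 : ZMod (2*p)) + u = u := zero_add u
      have eB : -u + u = (0:ZMod (2*p)) := neg_add_cancel u
      have eC : ((p:ZMod (2*p)) + -u) + u = (p:ZMod (2*p)) := by ring
      rw [eA, eB, eC, hw0, hwp, hw u hu0 hup, hw ((p:ZMod (2*p)) + u) hq0 hqp,
        hw (-u) hnu0 hnup, hw ((p:ZMod (2*p)) + -u) hpu0 hpup,
        hεadd (p:ZMod (2*p)) u, hεadd (p:ZMod (2*p)) (-u), hεp, hεneg,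
        hcadd (p:ZMod (2*p)) u, hcadd (p:ZMod (2*p)) (-u), hcp, hcneg, hc0]
      simp only [zero_add, neg_add_cancel, ha0]
      ring
    rw [hwsum, hxsum]
    linear_combination (2*(-1:ℤ)^u.val) * hcomp ((u.val : ZMod p)) hv
end

section
/- Let p be an odd prime, let x = (x_k) be a binary sequence of length 2p indexed mod 2p defined by x_k = (-1)^k · b_{k mod p} where b is a ternary sequence of length p. Then for all 0 < u < 2p, R_x(u) = 2·(-1)^u · R_b(u mod p). -/
open Finset in
/-- If `x_k = (-1)^k · b_{k mod p}` is the length-`2p` alternating doubling of a real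
sequence `b` of odd prime length `p`, then `R_x(u) = 2·(-1)^u·R_b(u mod p)` for all
`u ≠ 0`. -/
theorem alternating_doubling_autocorrelation (p : ℕ) [Fact p.Prime] (hodd : Odd p)
    [NeZero (2 * p)]
    (b : ZMod p → ℝ) (x : ZMod (2 * p) → ℝ)
    (hx : ∀ k : ZMod (2 * p), x k = (-1) ^ k.val * b ((k.val : ZMod p))) :
    ∀ u : ZMod (2 * p), u ≠ 0 →
      ∑ k : ZMod (2 * p), x k * x (k + u) =
        2 * (-1) ^ u.val * ∑ k : ZMod p, b k * b (k + (u.val : ZMod p)) := by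
  intro u _
  have hcop : Nat.Coprime 2 p := by
    have := Nat.odd_iff.mp hodd
    simp [Nat.coprime_comm, Nat.Prime.coprime_iff_not_dvd Nat.prime_two, Nat.dvd_iff_mod_eq_zero,
      this]
  -- step 1: pointwise identity
  have key : ∀ k : ZMod (2 * p), x k * x (k + u) =
      (-1) ^ u.val * (b ((k.val : ZMod p)) * b ((k.val : ZMod p) + (u.val : ZMod p))) := by
    intro k
    have hval : (k + u).val = (k.val + u.val) % (2 * p) := ZMod.val_add k u
    have hpow : ((-1 : ℝ)) ^ k.val * (-1 : ℝ) ^ (k + u).val = (-1) ^ u.val := by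
      have h2 : (k + u).val % 2 = (k.val + u.val) % 2 := by
        rw [hval, Nat.mod_mod_of_dvd _ ⟨p, rfl⟩]
      rw [neg_one_pow_eq_pow_mod_two (n := (k+u).val), h2,
        ← neg_one_pow_eq_pow_mod_two, pow_add, ← mul_assoc, ← pow_add,
        ← two_mul, pow_mul, neg_one_sq, one_pow, one_mul]
    have hcast : (((k + u).val : ZMod p)) = (k.val : ZMod p) + (u.val : ZMod p) := by
      rw [hval, ← Nat.cast_add]
      exact (ZMod.natCast_eq_natCast_iff _ _ _).mpr
        (((Nat.mod_modEq (k.val + u.val) (2 * p)).of_dvd ⟨2, by ring⟩))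
    rw [hx k, hx (k + u), hcast, mul_mul_mul_comm, hpow]
  rw [Finset.sum_congr rfl (fun k _ => key k), ← Finset.mul_sum]
  -- step 2: the reduction map `ZMod (2p) → ZMod p` is 2-to-1
  let e := ZMod.chineseRemainder hcop
  have hsum : ∑ k : ZMod (2 * p), (b ((k.val : ZMod p)) * b ((k.val : ZMod p) + (u.val : ZMod p)))
      = 2 * ∑ j : ZMod p, b j * b (j + (u.val : ZMod p)) := by
    rw [← Equiv.sum_comp e.symm.toEquiv
      (fun k => b ((k.val : ZMod p)) * b ((k.val : ZMod p) + (u.val : ZMod p)))]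
    have hsnd : ∀ k : ZMod (2 * p), (k.val : ZMod p) = (e k).2 := by
      intro k
      rw [ZMod.natCast_val]
      exact (Prod.snd_zmod_cast k).symm
    have : ∀ y : ZMod 2 × ZMod p, ((e.symm.toEquiv y).val : ZMod p) = y.2 := by
      intro y
      rw [hsnd]
      simp
    simp only [this]
    rw [Fintype.sum_prod_type]
    simp [Fin.sum_univ_two, two_mul]
  rw [hsum]; ring
end

section
/- Suppose p is an odd prime such that 2p-1 is a prime power, and suppose there exist (i) symmetric binary sequences w, x of length 2p with R_w(u)+R_x(u) = 4-4p for u = p and 0 for u ∉ {0,p}, and (ii) a binary sequence y of length 2p with R_y(p) = 2p-4 and R_y(u) = -2 for u ∉ {0,p}. Then the pair (G(w,x), y), where G(w,x)_k = (1/2)(1+i)w_k + (1/2)(1-i)x_k, is a quaternary Legendre pair of length 2p: R_{G(w,x)}(u) + R_y(u) = -2 for all u ≠ 0. -/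
open Finset Complex in
/-- Assembly of Theorem 2: given symmetric binary `w, x` with the correlation
profile of Proposition W1 and binary `y` with the profile of Proposition W2,
the pair `(G(w,x), y)` is a quaternary Legendre pair of length `2p`. -/
theorem second_construction_assembly (p : ℕ) [Fact p.Prime] (hodd : Odd p)
    (hq : IsPrimePow (2 * p - 1)) [NeZero (2 * p)]
    (w x y : ZMod (2 * p) → ℂ)
    (hw : ∀ k, w k = 1 ∨ w k = -1) (hx : ∀ k, x k = 1 ∨ x k = -1)
    (hy : ∀ k, y k = 1 ∨ y k = -1)
    (hwsym : ∀ k : ZMod (2 * p), k ≠ 0 → w k = w (-k))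
    (hxsym : ∀ k : ZMod (2 * p), k ≠ 0 → x k = x (-k))
    (hwxp : (∑ k : ZMod (2 * p), w k * (starRingEnd ℂ) (w (k + (p : ZMod (2 * p))))) +
        ∑ k : ZMod (2 * p), x k * (starRingEnd ℂ) (x (k + (p : ZMod (2 * p)))) =
        4 - 4 * p)
    (hwxu : ∀ u : ZMod (2 * p), u ≠ 0 → u ≠ (p : ZMod (2 * p)) →
      (∑ k : ZMod (2 * p), w k * (starRingEnd ℂ) (w (k + u))) +
        ∑ k : ZMod (2 * p), x k * (starRingEnd ℂ) (x (k + u)) = 0)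
    (hyp : ∑ k : ZMod (2 * p), y k * (starRingEnd ℂ) (y (k + (p : ZMod (2 * p)))) =
        2 * p - 4)
    (hyu : ∀ u : ZMod (2 * p), u ≠ 0 → u ≠ (p : ZMod (2 * p)) →
      ∑ k : ZMod (2 * p), y k * (starRingEnd ℂ) (y (k + u)) = -2)
    (a : ZMod (2 * p) → ℂ)
    (ha : ∀ k, a k = (1 + I) / 2 * w k + (1 - I) / 2 * x k) :
    ∀ u : ZMod (2 * p), u ≠ 0 →
      (∑ k : ZMod (2 * p), a k * (starRingEnd ℂ) (a (k + u))) +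
        ∑ k : ZMod (2 * p), y k * (starRingEnd ℂ) (y (k + u)) = -2 := by
  have hwsym' : ∀ k : ZMod (2 * p), w (-k) = w k := by
    intro k
    by_cases h : k = 0
    · simp [h]
    · exact (hwsym k h).symm
  have hxsym' : ∀ k : ZMod (2 * p), x (-k) = x k := by
    intro k
    by_cases h : k = 0
    · simp [h]
    · exact (hxsym k h).symm
  have hconjw : ∀ m, (starRingEnd ℂ) (w m) = w m := by
    intro m; rcases hw m with h | h <;> simp [h]
  have hconjx : ∀ m, (starRingEnd ℂ) (x m) = x m := by
    intro m; rcases hx m with h | h <;> simp [h]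
  have hcross : ∀ u : ZMod (2 * p),
      ∑ k : ZMod (2 * p), w k * x (k + u) = ∑ k : ZMod (2 * p), x k * w (k + u) := by
    intro u
    have hb : Function.Bijective (fun k : ZMod (2 * p) => -k - u) := by
      apply Function.Involutive.bijective
      intro k; show -(-k - u) - u = k; ring
    refine Fintype.sum_bijective _ hb _ _ (fun k => ?_)
    show w k * x (k + u) = x (-k - u) * w (-k - u + u)
    have h1 : -k - u + u = -k := by ring
    have h2 : x (-k - u) = x (k + u) := by
      have : -k - u = -(k + u) := by ring
      rw [this, hxsym']
    rw [h1, h2, hwsym']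
    ring
  have key : ∀ u : ZMod (2 * p),
      ∑ k : ZMod (2 * p), a k * (starRingEnd ℂ) (a (k + u)) =
        ((∑ k : ZMod (2 * p), w k * (starRingEnd ℂ) (w (k + u))) +
          ∑ k : ZMod (2 * p), x k * (starRingEnd ℂ) (x (k + u))) / 2 := by
    intro u
    have hterm : ∀ k : ZMod (2 * p), a k * (starRingEnd ℂ) (a (k + u)) =
        (w k * w (k + u) + x k * x (k + u)) / 2
          + I / 2 * (w k * x (k + u)) - I / 2 * (x k * w (k + u)) := by
      intro k
      rw [ha, ha]
      simp only [map_add, map_mul, map_div₀, map_one, map_ofNat, Complex.conj_I,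
        hconjw, hconjx, map_sub]
      linear_combination ((w k * x (k + u) + x k * w (k + u) - w k * w (k + u)
        - x k * x (k + u)) / 4) * Complex.I_mul_I
    calc ∑ k : ZMod (2 * p), a k * (starRingEnd ℂ) (a (k + u))
        = ∑ k : ZMod (2 * p), ((w k * w (k + u) + x k * x (k + u)) / 2
            + I / 2 * (w k * x (k + u)) - I / 2 * (x k * w (k + u))) :=
          Finset.sum_congr rfl (fun k _ => hterm k)
      _ = ((∑ k : ZMod (2 * p), w k * (starRingEnd ℂ) (w (k + u))) +
          ∑ k : ZMod (2 * p), x k * (starRingEnd ℂ) (x (k + u))) / 2 := by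
          simp only [Finset.sum_sub_distrib, Finset.sum_add_distrib, ← Finset.sum_div,
            ← Finset.mul_sum, hcross u, hconjw, hconjx]
          ring
  intro u hu
  rw [key u]
  by_cases hup : u = (p : ZMod (2 * p))
  · rw [hup, hwxp, hyp]
    push_cast
    ring
  · rw [hwxu u hu hup, hyu u hu hup]
    norm_num
end
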